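/- arXiv:1503.01985 — 2 statements merged into one kernel-verified Lean document; each statement's English description precedes it below -/
import Mathlib

section
/- Let 0 < p < |z| < 1, q = sqrt(1-p^2), x = p(1-z^2)/(qz), y = sqrt(1-x^2-z^2). Then the vectors a = (0,0,1), b = (q,0,p), c = (x,y,z) in R^3 satisfy: the cross products α = a × c and β = b × c are orthogonal, i.e., ⟨α|β⟩ = 0. -/
open Matrix

theorem contraction_cross_products_orthogonal (p z q x y : ℝ)
    (hp : 0 < p) (hpz : p < |z|) (hz : |z| < 1)
    (hq : q = Real.sqrt (1 - p ^ 2))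
    (hx : x = p * (1 - z ^ 2) / (q * z))
    (hy : y = Real.sqrt (1 - x ^ 2 - z ^ 2)) :
    let a : Fin 3 → ℝ := ![0, 0, 1]
    let b : Fin 3 → ℝ := ![q, 0, p]
    let c : Fin 3 → ℝ := ![x, y, z]
    (crossProduct a c) ⬝ᵥ (crossProduct b c) = 0 := by
  intro a b c
  have hp1 : p < 1 := lt_trans hpz hz
  have hq0 : 0 < q := by
    rw [hq]; exact Real.sqrt_pos.mpr (by nlinarith)
  have hq2 : q ^ 2 = 1 - p ^ 2 := by
    rw [hq]; exact Real.sq_sqrt (by nlinarith)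
  have hz0 : z ≠ 0 := by
    intro h; rw [h, abs_zero] at hpz; linarith
  have habs : p < |z| := hpz
  have hz2 : p ^ 2 < z ^ 2 := by
    have := sq_abs z
    nlinarith [sq_nonneg (|z| - p), abs_nonneg z]
  have hz2' : z ^ 2 < 1 := by
    have := sq_abs z
    nlinarith [abs_nonneg z]
  have hxqz : x * (q * z) = p * (1 - z ^ 2) := by
    rw [hx]; field_simp
  have hx2 : x ^ 2 * (q ^ 2 * z ^ 2) = p ^ 2 * (1 - z ^ 2) ^ 2 := by
    calc x ^ 2 * (q ^ 2 * z ^ 2) = (x * (q * z)) ^ 2 := by ring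
    _ = (p * (1 - z ^ 2)) ^ 2 := by rw [hxqz]
    _ = p ^ 2 * (1 - z ^ 2) ^ 2 := by ring
  have hnn : 0 ≤ 1 - x ^ 2 - z ^ 2 := by
    have hq2z : 0 < q ^ 2 * z ^ 2 := by positivity
    nlinarith [hx2, hq2]
  have hy2 : y ^ 2 = 1 - x ^ 2 - z ^ 2 := by
    rw [hy]; exact Real.sq_sqrt hnn
  show (crossProduct a c) ⬝ᵥ (crossProduct b c) = 0
  simp [crossProduct, a, b, c, dotProduct, Fin.sum_univ_three]
  nlinarith [hy2, hxqz]
end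

section
/- In R^3 with the standard inner product, the vectors a = (1,0,0) and b = (1/2)(1, sqrt(2), 1) satisfy ⟨a|b⟩ = 1/sqrt(2), and the 26 triples of vectors C_1 through C_26 listed from the 37 vectors of Table I (after normalization) are each orthonormal bases of R^3. -/
noncomputable def ev (u : Fin 3 → ℝ) : EuclideanSpace ℝ (Fin 3) := (WithLp.equiv 2 (Fin 3 → ℝ)).symm u

/-- The normalization of a vector of `ℝ^3`. -/
noncomputable def nv (u : Fin 3 → ℝ) : EuclideanSpace ℝ (Fin 3) := ‖ev u‖⁻¹ • ev u

/-- The (normalized) vectors `u, v, w` form an orthonormal basis of `ℝ^3`. -/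
def IsONB (u v w : Fin 3 → ℝ) : Prop :=
  Orthonormal ℝ ![nv u, nv v, nv w] ∧
  Submodule.span ℝ {nv u, nv v, nv w} = (⊤ : Submodule ℝ (EuclideanSpace ℝ (Fin 3)))

noncomputable def va : Fin 3 → ℝ := ![(1 : ℝ), (0 : ℝ), (0 : ℝ)]
noncomputable def vb : Fin 3 → ℝ := ![(Real.sqrt 2 : ℝ), (1 : ℝ), (1 : ℝ)]
noncomputable def v1 : Fin 3 → ℝ := ![(0 : ℝ), (1 : ℝ), (1 : ℝ)]
noncomputable def v2 : Fin 3 → ℝ := ![(0 : ℝ), (1 : ℝ), (-1 : ℝ)]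
noncomputable def v3 : Fin 3 → ℝ := ![(Real.sqrt 2 : ℝ), (-1 : ℝ), (-1 : ℝ)]
noncomputable def v4 : Fin 3 → ℝ := ![(0 : ℝ), (0 : ℝ), (1 : ℝ)]
noncomputable def v5 : Fin 3 → ℝ := ![(0 : ℝ), (1 : ℝ), (0 : ℝ)]
noncomputable def v6 : Fin 3 → ℝ := ![(Real.sqrt 2 : ℝ), (1 : ℝ), (-3 : ℝ)]
noncomputable def v7 : Fin 3 → ℝ := ![(1 : ℝ), (-Real.sqrt 2 : ℝ), (0 : ℝ)]
noncomputable def v8 : Fin 3 → ℝ := ![(Real.sqrt 2 : ℝ), (-3 : ℝ), (1 : ℝ)]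
noncomputable def v9 : Fin 3 → ℝ := ![(1 : ℝ), (0 : ℝ), (-Real.sqrt 2 : ℝ)]
noncomputable def v10 : Fin 3 → ℝ := ![(Real.sqrt 2 : ℝ), (1 : ℝ), (0 : ℝ)]
noncomputable def v11 : Fin 3 → ℝ := ![(Real.sqrt 2 : ℝ), (0 : ℝ), (1 : ℝ)]
noncomputable def v12 : Fin 3 → ℝ := ![(Real.sqrt 2 : ℝ), (-2 : ℝ), (-3 : ℝ)]
noncomputable def v13 : Fin 3 → ℝ := ![(1 : ℝ), (-Real.sqrt 2 : ℝ), (Real.sqrt 2 : ℝ)]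
noncomputable def v14 : Fin 3 → ℝ := ![(Real.sqrt 2 : ℝ), (-3 : ℝ), (-2 : ℝ)]
noncomputable def v15 : Fin 3 → ℝ := ![(1 : ℝ), (Real.sqrt 2 : ℝ), (-Real.sqrt 2 : ℝ)]
noncomputable def v16 : Fin 3 → ℝ := ![(Real.sqrt 8 : ℝ), (1 : ℝ), (-1 : ℝ)]
noncomputable def v17 : Fin 3 → ℝ := ![(Real.sqrt 8 : ℝ), (-1 : ℝ), (1 : ℝ)]
noncomputable def v18 : Fin 3 → ℝ := ![(Real.sqrt 2 : ℝ), (-7 : ℝ), (-3 : ℝ)]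
noncomputable def v19 : Fin 3 → ℝ := ![(Real.sqrt 2 : ℝ), (-1 : ℝ), (3 : ℝ)]
noncomputable def v20 : Fin 3 → ℝ := ![(Real.sqrt 2 : ℝ), (-3 : ℝ), (-7 : ℝ)]
noncomputable def v21 : Fin 3 → ℝ := ![(Real.sqrt 2 : ℝ), (3 : ℝ), (-1 : ℝ)]
noncomputable def v22 : Fin 3 → ℝ := ![(1 : ℝ), (Real.sqrt 2 : ℝ), (0 : ℝ)]
noncomputable def v23 : Fin 3 → ℝ := ![(1 : ℝ), (0 : ℝ), (Real.sqrt 2 : ℝ)]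
noncomputable def v24 : Fin 3 → ℝ := ![(Real.sqrt 2 : ℝ), (-1 : ℝ), (-3 : ℝ)]
noncomputable def v25 : Fin 3 → ℝ := ![(Real.sqrt 2 : ℝ), (-1 : ℝ), (1 : ℝ)]
noncomputable def v26 : Fin 3 → ℝ := ![(Real.sqrt 2 : ℝ), (-3 : ℝ), (-1 : ℝ)]
noncomputable def v27 : Fin 3 → ℝ := ![(Real.sqrt 2 : ℝ), (1 : ℝ), (-1 : ℝ)]
noncomputable def v28 : Fin 3 → ℝ := ![(Real.sqrt 2 : ℝ), (-1 : ℝ), (0 : ℝ)]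
noncomputable def v29 : Fin 3 → ℝ := ![(Real.sqrt 2 : ℝ), (0 : ℝ), (-1 : ℝ)]
noncomputable def v30 : Fin 3 → ℝ := ![(Real.sqrt 2 : ℝ), (2 : ℝ), (3 : ℝ)]
noncomputable def v31 : Fin 3 → ℝ := ![(Real.sqrt 2 : ℝ), (3 : ℝ), (2 : ℝ)]
noncomputable def v32 : Fin 3 → ℝ := ![(Real.sqrt 2 : ℝ), (3 : ℝ), (7 : ℝ)]
noncomputable def v33 : Fin 3 → ℝ := ![(Real.sqrt 2 : ℝ), (7 : ℝ), (3 : ℝ)]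
noncomputable def v34 : Fin 3 → ℝ := ![(Real.sqrt 2 : ℝ), (1 : ℝ), (3 : ℝ)]
noncomputable def v35 : Fin 3 → ℝ := ![(Real.sqrt 2 : ℝ), (3 : ℝ), (1 : ℝ)]

/-! Every context consists of three nonzero, pairwise orthogonal vectors of `ℝ³`: all the
coordinates are integers or integer multiples of `√2` (note `√8 = 2√2`), so this is a finite
computation using `√2 * √2 = 2`. Normalizing three such vectors gives an orthonormal family, hence
a basis of `ℝ³`. Finally `⟨a, b⟩ = √2` with `‖a‖ = 1` and `‖b‖ = 2`. -/

open Matrix RealInnerProductSpace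

section

variable {E : Type*} [NormedAddCommGroup E] [InnerProductSpace ℝ E]

theorem real_inner_inv_norm_smul_inv_norm_smul (x y : E) :
    ⟪‖x‖⁻¹ • x, ‖y‖⁻¹ • y⟫ = ⟪x, y⟫ / (‖x‖ * ‖y‖) := by
  rw [real_inner_smul_left, real_inner_smul_right, div_eq_inv_mul, mul_inv, mul_assoc]

theorem orthonormal_inv_norm_smul {ι : Type*} {v : ι → E} (hv : ∀ i, v i ≠ 0)
    (hperp : Pairwise fun i j => ⟪v i, v j⟫ = 0) : Orthonormal ℝ fun i => ‖v i‖⁻¹ • v i :=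
  ⟨fun i => norm_smul_inv_norm (hv i), fun i j hij => by
    simp only [real_inner_inv_norm_smul_inv_norm_smul, hperp hij, zero_div]⟩

end

theorem LinearIndependent.span_eq_top_of_finrank_eq_three {K V : Type*} [DivisionRing K]
    [AddCommGroup V] [Module K V] {x y z : V} (hli : LinearIndependent K ![x, y, z])
    (hdim : Module.finrank K V = 3) : Submodule.span K {x, y, z} = ⊤ := by
  have : FiniteDimensional K V := Module.finite_of_finrank_eq_succ hdim
  rw [← hli.span_eq_top_of_card_eq_finrank (by simp [hdim]), range_cons, range_cons_cons_empty,
    Set.singleton_union]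

theorem inner_ev (u v : Fin 3 → ℝ) : ⟪ev u, ev v⟫ = u ⬝ᵥ v :=
  dotProduct_comm v u

theorem norm_ev (u : Fin 3 → ℝ) : ‖ev u‖ = √(u ⬝ᵥ u) := by
  rw [norm_eq_sqrt_real_inner, inner_ev]

theorem isONB_of_dotProduct_eq_zero {u v w : Fin 3 → ℝ} (hu : u ≠ 0) (hv : v ≠ 0) (hw : w ≠ 0)
    (huv : u ⬝ᵥ v = 0) (huw : u ⬝ᵥ w = 0) (hvw : v ⬝ᵥ w = 0) : IsONB u v w := by
  have hon : Orthonormal ℝ ![nv u, nv v, nv w] := by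
    have hnv : ![nv u, nv v, nv w] =
        fun i => ‖![ev u, ev v, ev w] i‖⁻¹ • ![ev u, ev v, ev w] i := by
      funext i
      fin_cases i <;> rfl
    rw [hnv]
    apply orthonormal_inv_norm_smul
    · intro i; fin_cases i <;> simpa [ev]
    · intro i j hij
      fin_cases i <;> fin_cases j <;> simp_all [inner_ev, dotProduct_comm]
  exact ⟨hon, hon.linearIndependent.span_eq_top_of_finrank_eq_three finrank_euclideanSpace_fin⟩

theorem inner_nv_va_nv_vb : ⟪nv va, nv vb⟫ = 1 / √2 := by
  have h4 : √4 = 2 := by rw [show (4 : ℝ) = 2 ^ 2 by norm_num, Real.sqrt_sq zero_le_two]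
  rw [nv, nv, real_inner_inv_norm_smul_inv_norm_smul, inner_ev, norm_ev, norm_ev]
  simp only [dotProduct, Fin.sum_univ_three, va, vb, cons_val]
  norm_num [h4]
  exact Real.sqrt_div_self

theorem table_contexts_orthonormal :
    (inner ℝ (nv va) (nv vb) : ℝ) = 1 / Real.sqrt 2 ∧
    IsONB va v1 v2 ∧
    IsONB va v4 v5 ∧
    IsONB vb v2 v3 ∧
    IsONB vb v6 v7 ∧
    IsONB vb v8 v9 ∧
    IsONB v4 v7 v10 ∧
    IsONB v5 v9 v11 ∧
    IsONB v10 v12 v13 ∧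
    IsONB v11 v14 v15 ∧
    IsONB v1 v13 v16 ∧
    IsONB v1 v15 v17 ∧
    IsONB v16 v18 v19 ∧
    IsONB v17 v20 v21 ∧
    IsONB v3 v19 v22 ∧
    IsONB v3 v21 v23 ∧
    IsONB v22 v24 v25 ∧
    IsONB v23 v26 v27 ∧
    IsONB v4 v22 v28 ∧
    IsONB v5 v23 v29 ∧
    IsONB v15 v28 v30 ∧
    IsONB v13 v29 v31 ∧
    IsONB v8 v16 v32 ∧
    IsONB v6 v17 v33 ∧
    IsONB v7 v27 v34 ∧
    IsONB v9 v25 v35 ∧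
    IsONB v1 v25 v27 := by
  have h8 : √8 = 2 * √2 := by
    rw [show (8 : ℝ) = 2 ^ 2 * 2 by norm_num, Real.sqrt_mul (sq_nonneg 2), Real.sqrt_sq zero_le_two]
  refine ⟨inner_nv_va_nv_vb, ?_, ?_, ?_, ?_, ?_, ?_, ?_, ?_, ?_, ?_, ?_, ?_, 
    ?_, ?_, ?_, ?_, ?_, ?_, ?_, ?_, ?_, ?_, ?_, ?_, ?_, ?_⟩ <;>
    apply isONB_of_dotProduct_eq_zero <;>
    simp only [dotProduct, Fin.sum_univ_three, cons_val_zero, cons_val_one, cons_val, ne_eq,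
      cons_eq_zero_iff, zero_empty, h8, va, vb, v1, v2, v3, v4, v5, v6, v7, v8, v9, v10, v11,
      v12, v13, v14, v15, v16, v17, v18, v19, v20, v21, v22, v23, v24, v25, v26, v27, v28, v29,
      v30, v31, v32, v33, v34, v35] <;> ring_nf <;> norm_num
end
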